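/- arXiv:1207.1514 — 4 statements merged into one kernel-verified Lean document; each statement's English description precedes it below -/
import Mathlib

section
/- The infinite series ∑_{l=0}^∞ (2l)! / (4^l (l!)^2 (2l+1)) converges and equals π/2. -/
/-!
By the binomial series, `arcsin' x = (1 - x²)^(-1/2) = ∑ aₗ x^(2l)` on `(-1, 1)` with
`aₗ = (2l)! / (4^l (l!)²)`, so termwise integration gives `arcsin x = ∑ aₗ x^(2l+1) / (2l+1)`
there. All coefficients are nonnegative, so letting `x → 1⁻` (monotone convergence) yields both
the convergence of the series at `x = 1` and its value `arcsin 1 = π / 2`.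
-/

open Real Filter Topology Set Nat

noncomputable def invSqrtCoeff (l : ℕ) : ℝ := (2 * l)! / (4 ^ l * (l !) ^ 2)

lemma invSqrtCoeff_nonneg (l : ℕ) : 0 ≤ invSqrtCoeff l := by
  unfold invSqrtCoeff; positivity

lemma invSqrtCoeff_succ_mul (l : ℕ) :
    invSqrtCoeff (l + 1) * (l + 1) = invSqrtCoeff l * (1 / 2 + l) := by
  have h : (2 * (l + 1))! = (2 * l + 2) * ((2 * l + 1) * (2 * l)!) := by
    rw [show 2 * (l + 1) = 2 * l + 1 + 1 by ring, factorial_succ, factorial_succ]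
  simp only [invSqrtCoeff, h, factorial_succ l]
  push_cast
  field_simp
  ring

lemma invSqrtCoeff_eq_multichoose (l : ℕ) : invSqrtCoeff l = Ring.multichoose (1 / 2 : ℝ) l := by
  have hpoch : invSqrtCoeff l * l ! = (ascPochhammer ℝ l).eval (1 / 2) := by
    induction l with
    | zero => simp [invSqrtCoeff]
    | succ l ih =>
      rw [ascPochhammer_succ_eval, ← ih, factorial_succ]
      push_cast
      linear_combination (l ! : ℝ) * invSqrtCoeff_succ_mul l
  have h := Ring.factorial_nsmul_multichoose_eq_ascPochhammer (1 / 2 : ℝ) l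
  rw [Polynomial.ascPochhammer_smeval_eq_eval, ← hpoch, nsmul_eq_mul, mul_comm] at h
  exact (mul_right_cancel₀ (by positivity) h).symm

lemma hasSum_invSqrtCoeff_mul_pow {y : ℝ} (hy : |y| < 1) :
    HasSum (fun l ↦ invSqrtCoeff l * y ^ l) (1 / √(1 - y)) := by
  have h := (one_div_one_sub_rpow_hasFPowerSeriesOnBall_zero (1 / 2)).hasSum (y := y)
    (by simpa [edist_zero_right, ← ofReal_norm] using hy)
  simp only [FormalMultilinearSeries.ofScalars_apply_eq, zero_add, smul_eq_mul] at h
  simpa only [sqrt_eq_rpow, invSqrtCoeff_eq_multichoose, Ring.multichoose_eq] using h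

lemma hasSum_invSqrtCoeff_mul_sq_pow {x : ℝ} (hx : |x| < 1) :
    HasSum (fun l ↦ invSqrtCoeff l * (x ^ 2) ^ l) (1 / √(1 - x ^ 2)) :=
  hasSum_invSqrtCoeff_mul_pow (by rwa [abs_sq, sq_lt_one_iff_abs_lt_one])

lemma hasDerivAt_div_mul_pow_odd (c : ℝ) (l : ℕ) (y : ℝ) :
    HasDerivAt (fun z ↦ c / (2 * l + 1) * z ^ (2 * l + 1)) (c * (y ^ 2) ^ l) y := by
  refine ((hasDerivAt_pow (2 * l + 1) y).const_mul (c / (2 * l + 1))).congr_deriv ?_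
  rw [← pow_mul, add_tsub_cancel_right]
  push_cast
  field_simp

lemma summable_and_hasDerivAt_arcsin_series {x : ℝ} (hx : |x| < 1) :
    Summable (fun l ↦ invSqrtCoeff l / (2 * l + 1) * x ^ (2 * l + 1)) ∧
      HasDerivAt (fun y ↦ ∑' l, invSqrtCoeff l / (2 * l + 1) * y ^ (2 * l + 1))
        (1 / √(1 - x ^ 2)) x := by
  obtain ⟨r, hxr, hr⟩ := exists_between hx
  have hr0 : 0 < r := (abs_nonneg x).trans_lt hxr
  rw [← Real.norm_eq_abs, ← mem_ball_zero_iff] at hxr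
  rw [← abs_of_pos hr0] at hr
  have hderiv (l : ℕ) (y : ℝ) (_ : y ∈ Metric.ball (0 : ℝ) r) :=
    hasDerivAt_div_mul_pow_odd (invSqrtCoeff l) l y
  have hbound (l : ℕ) (y : ℝ) (hy : y ∈ Metric.ball (0 : ℝ) r) :
      ‖invSqrtCoeff l * (y ^ 2) ^ l‖ ≤ invSqrtCoeff l * (r ^ 2) ^ l := by
    rw [mem_ball_zero_iff, Real.norm_eq_abs] at hy
    rw [norm_mul, norm_pow, norm_pow, Real.norm_eq_abs, Real.norm_eq_abs,
      abs_of_nonneg (invSqrtCoeff_nonneg l)]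
    gcongr
    exact invSqrtCoeff_nonneg l
  have hu := (hasSum_invSqrtCoeff_mul_sq_pow hr).summable
  have h0 : Summable (fun l ↦ invSqrtCoeff l / (2 * l + 1) * (0 : ℝ) ^ (2 * l + 1)) := by
    simp
  refine ⟨summable_of_summable_hasDerivAt_of_isPreconnected
    (g := fun l y ↦ invSqrtCoeff l / (2 * l + 1) * y ^ (2 * l + 1))
    (g' := fun l y ↦ invSqrtCoeff l * (y ^ 2) ^ l) hu Metric.isOpen_ball
    (convex_ball 0 r).isPreconnected hderiv hbound (Metric.mem_ball_self hr0) h0 hxr, ?_⟩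
  rw [← (hasSum_invSqrtCoeff_mul_sq_pow hx).tsum_eq]
  exact hasDerivAt_tsum_of_isPreconnected
    (g := fun l y ↦ invSqrtCoeff l / (2 * l + 1) * y ^ (2 * l + 1))
    (g' := fun l y ↦ invSqrtCoeff l * (y ^ 2) ^ l) hu Metric.isOpen_ball
    (convex_ball 0 r).isPreconnected hderiv hbound (Metric.mem_ball_self hr0) h0 hxr

lemma hasSum_arcsin {x : ℝ} (hx : |x| < 1) :
    HasSum (fun l ↦ invSqrtCoeff l / (2 * l + 1) * x ^ (2 * l + 1)) (arcsin x) := by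
  set F := fun y ↦ ∑' l : ℕ, invSqrtCoeff l / (2 * l + 1) * y ^ (2 * l + 1)
  have hderiv {y : ℝ} (hy : y ∈ Ioo (-1 : ℝ) 1) :
      HasDerivAt F (1 / √(1 - y ^ 2)) y ∧ HasDerivAt arcsin (1 / √(1 - y ^ 2)) y :=
    ⟨(summable_and_hasDerivAt_arcsin_series (abs_lt.2 hy)).2,
      hasDerivAt_arcsin hy.1.ne' hy.2.ne⟩
  have hF_eq : EqOn F arcsin (Ioo (-1) 1) :=
    isOpen_Ioo.eqOn_of_deriv_eq isPreconnected_Ioo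
      (fun y hy ↦ (hderiv hy).1.differentiableAt.differentiableWithinAt)
      (fun y hy ↦ (hderiv hy).2.differentiableAt.differentiableWithinAt)
      (fun y hy ↦ (hderiv hy).1.deriv.trans (hderiv hy).2.deriv.symm)
      (by norm_num : (0 : ℝ) ∈ Ioo (-1) 1) (by simp [F])
  rw [← hF_eq (abs_lt.1 hx)]
  exact (summable_and_hasDerivAt_arcsin_series hx).1.hasSum

lemma hasSum_of_hasSum_mul_pow_of_tendsto {ι : Type*} {c : ι → ℝ} (hc : 0 ≤ c) (e : ι → ℕ)
    {f : ℝ → ℝ} {L : ℝ} (hf : ∀ x ∈ Ioo (0 : ℝ) 1, HasSum (fun i ↦ c i * x ^ e i) (f x))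
    (hL : Tendsto f (𝓝[<] 1) (𝓝 L)) : HasSum c L := by
  have hsum_le (s : Finset ι) : ∑ i ∈ s, c i ≤ L := by
    have hlim : Tendsto (fun x : ℝ ↦ ∑ i ∈ s, c i * x ^ e i) (𝓝[<] 1) (𝓝 (∑ i ∈ s, c i)) := by
      have : Continuous (fun x : ℝ ↦ ∑ i ∈ s, c i * x ^ e i) := by fun_prop
      simpa using this.continuousWithinAt.tendsto (x := 1) (s := Iio 1)
    refine le_of_tendsto_of_tendsto hlim hL ?_
    filter_upwards [Ioo_mem_nhdsLT one_pos] with x hx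
    exact sum_le_hasSum s (fun i _ ↦ mul_nonneg (hc i) (pow_nonneg hx.1.le _)) (hf x hx)
  have hc_summable : Summable c := summable_of_sum_le hc hsum_le
  have hL_le : L ≤ ∑' i, c i := by
    refine le_of_tendsto hL ?_
    filter_upwards [Ioo_mem_nhdsLT one_pos] with x hx
    refine hasSum_le (fun i ↦ ?_) (hf x hx) hc_summable.hasSum
    exact mul_le_of_le_one_right (hc i) (pow_le_one₀ hx.1.le hx.2.le)
  rw [← le_antisymm (hc_summable.tsum_le_of_sum_le hsum_le) hL_le]
  exact hc_summable.hasSum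

theorem arcsin_one_series :
    Summable (fun l : ℕ =>
      (Nat.factorial (2 * l) : ℝ) / (4 ^ l * (Nat.factorial l) ^ 2 * (2 * l + 1))) ∧
    (∑' l : ℕ,
      (Nat.factorial (2 * l) : ℝ) / (4 ^ l * (Nat.factorial l) ^ 2 * (2 * l + 1)))
      = Real.pi / 2 := by
  have hterm : (fun l : ℕ ↦
      (Nat.factorial (2 * l) : ℝ) / (4 ^ l * (Nat.factorial l) ^ 2 * (2 * l + 1))) =
      fun l ↦ invSqrtCoeff l / (2 * l + 1) := by
    ext l
    rw [invSqrtCoeff, div_div]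
  have hlim : Tendsto arcsin (𝓝[<] 1) (𝓝 (π / 2)) :=
    arcsin_one ▸ continuous_arcsin.continuousWithinAt.tendsto
  have hsum : HasSum (fun l ↦ invSqrtCoeff l / (2 * l + 1)) (π / 2) :=
    hasSum_of_hasSum_mul_pow_of_tendsto
      (fun l ↦ div_nonneg (invSqrtCoeff_nonneg l) (by positivity)) (fun l ↦ 2 * l + 1)
      (fun x hx ↦ hasSum_arcsin (abs_lt.2 ⟨by linarith [hx.1], hx.2⟩)) hlim
  rw [hterm]
  exact ⟨hsum.summable, hsum.tsum_eq⟩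
end

section
/- Let Z be a nonnegative real random variable and θ an independent random variable uniformly distributed on [0, 2π]. Suppose there exist constants c > 0, z_th > 0, and α > 0 such that P(Z > z) = c / z^α for all z ≥ z_th. Then for all x ≥ z_th, P(Z·cos θ > x) = c₁ / x^α, where c₁ = (c/π) ∫_0^{π/2} (cos ϑ)^α dϑ. -/
/-!
Conditionally on `θ = t`, the event `Z cos t > x` is empty when `cos t ≤ 0`, and otherwise it is
`Z > x / cos t` with `x / cos t ≥ x ≥ z_th`, of probability `c (cos t)^α / x^α` by the tail law.
Averaging over the uniform `θ` gives `(c / x^α) (1 / 2π) ∫₀^{2π} (cos⁺ t)^α dt`, and the positive part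
of the cosine contributes two quarter periods, each equal to `∫₀^{π/2} cos^α`.
-/

open MeasureTheory ProbabilityTheory Real

lemma measure_preimage_prodMk_eq_lintegral_of_indepFun {Ω α β : Type*} [MeasurableSpace Ω]
    [MeasurableSpace α] [MeasurableSpace β] {μ : Measure Ω} [IsFiniteMeasure μ]
    {X : Ω → α} {Y : Ω → β} (hX : Measurable X) (hY : Measurable Y) (hXY : IndepFun X Y μ)
    {s : Set (α × β)} (hs : MeasurableSet s) :
    μ ((fun ω => (X ω, Y ω)) ⁻¹' s) = ∫⁻ a, μ (Y ⁻¹' (Prod.mk a ⁻¹' s)) ∂μ.map X := by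
  rw [← Measure.map_apply (hX.prodMk hY) hs,
    (indepFun_iff_map_prod_eq_prod_map_map hX.aemeasurable hY.aemeasurable).1 hXY,
    Measure.prod_apply hs]
  exact lintegral_congr fun a => Measure.map_apply hY (measurable_prodMk_left hs)

lemma measure_mul_gt_of_tail {Ω : Type*} [MeasurableSpace Ω] {μ : Measure Ω} {Z : Ω → ℝ}
    (hZ : ∀ ω, 0 ≤ Z ω) {c z₀ α x a : ℝ} (hα : 0 < α) (hx : z₀ ≤ x) (hx₀ : 0 < x) (ha : a ≤ 1)
    (htail : ∀ z ≥ z₀, μ {ω | Z ω > z} = ENNReal.ofReal (c / z ^ α)) :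
    μ {ω | Z ω * a > x} = ENNReal.ofReal (c / x ^ α * max a 0 ^ α) := by
  rcases le_or_gt a 0 with ha₀ | ha₀
  · have hempty : {ω | Z ω * a > x} = ∅ :=
      Set.eq_empty_of_forall_notMem fun ω hω =>
        (mul_nonpos_of_nonneg_of_nonpos (hZ ω) ha₀).not_gt (hx₀.trans hω)
    rw [hempty, measure_empty, max_eq_right ha₀, zero_rpow hα.ne', mul_zero, ENNReal.ofReal_zero]
  · have hset : {ω | Z ω * a > x} = {ω | Z ω > x / a} := by
      ext ω
      exact (div_lt_iff₀ ha₀).symm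
    have hxa : x ≤ x / a := (le_div_iff₀ ha₀).2 (mul_le_of_le_one_right hx₀.le ha)
    rw [hset, htail _ (hx.trans hxa), max_eq_left ha₀.le, div_rpow hx₀.le ha₀.le]
    congr 1
    have := rpow_pos_of_pos ha₀ α
    field_simp

lemma lintegral_Icc_ofReal_eq_intervalIntegral {f : ℝ → ℝ} {a b : ℝ} (hab : a ≤ b)
    (hf : Continuous f) (hf₀ : ∀ t, 0 ≤ f t) :
    ∫⁻ t in Set.Icc a b, ENNReal.ofReal (f t) = ENNReal.ofReal (∫ t in a..b, f t) := by
  rw [← ofReal_integral_eq_lintegral_ofReal hf.integrableOn_Icc (ae_of_all _ hf₀),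
    integral_Icc_eq_integral_Ioc, intervalIntegral.integral_of_le hab]

lemma integral_max_cos_zero_rpow_eq_integral_cos_rpow {α a b : ℝ} (hab : a ≤ b)
    (ha : -(π / 2) ≤ a) (hb : b ≤ π / 2) :
    ∫ t in a..b, max (cos t) 0 ^ α = ∫ t in a..b, cos t ^ α := by
  refine intervalIntegral.integral_congr fun t ht => ?_
  rw [Set.uIcc_of_le hab] at ht
  rw [max_eq_left (cos_nonneg_of_mem_Icc ⟨ha.trans ht.1, ht.2.trans hb⟩)]

lemma integral_max_cos_zero_rpow_zero_two_pi {α : ℝ} (hα : 0 < α) :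
    ∫ t in (0:ℝ)..(2 * π), max (cos t) 0 ^ α = 2 * ∫ t in (0:ℝ)..(π / 2), cos t ^ α := by
  have hπ := pi_pos
  have hint (a b : ℝ) : IntervalIntegrable (fun t => max (cos t) 0 ^ α) volume a b :=
    ((continuous_cos.max continuous_const).rpow_const fun _ => Or.inr hα.le).intervalIntegrable a b
  have hfirst := integral_max_cos_zero_rpow_eq_integral_cos_rpow (α := α)
    (a := 0) (b := π / 2) (by positivity) (by linarith) le_rfl
  have hmiddle : ∫ t in (π / 2)..(3 * π / 2), max (cos t) 0 ^ α = 0 := by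
    refine intervalIntegral.integral_zero_ae (ae_of_all _ fun t ht => ?_)
    rw [Set.uIoc_of_le (by linarith)] at ht
    rw [max_eq_right (cos_nonpos_of_pi_div_two_le_of_le ht.1.le (by linarith [ht.2])),
      zero_rpow hα.ne']
  have hlast : ∫ t in (3 * π / 2)..(2 * π), max (cos t) 0 ^ α
      = ∫ t in (0:ℝ)..(π / 2), cos t ^ α := by
    have hreflect := intervalIntegral.integral_comp_sub_left
      (fun t => max (cos t) 0 ^ α) (a := 0) (b := π / 2) (2 * π)
    rw [show 2 * π - π / 2 = 3 * π / 2 by ring, sub_zero] at hreflect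
    simp only [cos_two_pi_sub] at hreflect
    rw [← hreflect, ← hfirst]
  rw [← intervalIntegral.integral_add_adjacent_intervals (b := 3 * π / 2) (hint _ _) (hint _ _),
    ← intervalIntegral.integral_add_adjacent_intervals (b := π / 2) (hint _ _) (hint _ _),
    hfirst, hmiddle, hlast]
  ring

theorem power_law_tail_Z_cos
    {Ω : Type*} [MeasureSpace Ω] [IsProbabilityMeasure (ℙ : Measure Ω)]
    (Z θ : Ω → ℝ) (hZm : Measurable Z) (hθm : Measurable θ)
    (hZpos : ∀ ω, 0 ≤ Z ω)
    (hindep : IndepFun Z θ ℙ)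
    (hθunif : Measure.map θ ℙ
      = (ENNReal.ofReal (2 * π))⁻¹ • (volume.restrict (Set.Icc (0:ℝ) (2 * π))))
    (c z_th α : ℝ) (hc : 0 < c) (hzth : 0 < z_th) (hα : 0 < α)
    (htail : ∀ z ≥ z_th, ℙ {ω | Z ω > z} = ENNReal.ofReal (c / z ^ α)) :
    ∀ x ≥ z_th,
      ℙ {ω | Z ω * Real.cos (θ ω) > x}
        = ENNReal.ofReal
            ((c / π) * (∫ ϑ in (0:ℝ)..(π / 2), (Real.cos ϑ) ^ α) / x ^ α) := by
  intro x hx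
  have hx₀ : 0 < x := hzth.trans_le hx
  have hs : MeasurableSet {p : ℝ × ℝ | p.2 * cos p.1 > x} :=
    measurableSet_lt measurable_const (measurable_snd.mul (measurable_cos.comp measurable_fst))
  have hcont : Continuous fun t => c / x ^ α * max (cos t) 0 ^ α :=
    continuous_const.mul ((continuous_cos.max continuous_const).rpow_const fun _ => Or.inr hα.le)
  have hnonneg (t : ℝ) : 0 ≤ c / x ^ α * max (cos t) 0 ^ α := by positivity
  have hslice (t : ℝ) : ℙ (Z ⁻¹' (Prod.mk t ⁻¹' {p : ℝ × ℝ | p.2 * cos p.1 > x}))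
      = ENNReal.ofReal (c / x ^ α * max (cos t) 0 ^ α) :=
    measure_mul_gt_of_tail hZpos hα hx hx₀ (cos_le_one t) htail
  change ℙ ((fun ω => (θ ω, Z ω)) ⁻¹' {p : ℝ × ℝ | p.2 * cos p.1 > x}) = _
  rw [measure_preimage_prodMk_eq_lintegral_of_indepFun hθm hZm hindep.symm hs,
    lintegral_congr hslice, hθunif, lintegral_smul_measure,
    lintegral_Icc_ofReal_eq_intervalIntegral two_pi_pos.le hcont hnonneg,
    intervalIntegral.integral_const_mul, integral_max_cos_zero_rpow_zero_two_pi hα, smul_eq_mul, ← ENNReal.div_eq_inv_mul, ← ENNReal.ofReal_div_of_pos two_pi_pos]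
  congr 1
  field_simp
end

section
/- Let Z₁, Z₂ be i.i.d. nonnegative random variables with P(Z > z) = c/z^α for all z ≥ z_th (c > 0, z_th > 0, α > 0), and θ₁, θ₂ i.i.d. Uniform[0,2π], with Z₁, Z₂, θ₁, θ₂ mutually independent. Then for all z ≥ 2 z_th, P(Z₁ cos θ₁ − Z₂ cos θ₂ > z) ≤ c_u / z^α, where c_u = (2^{1+α} c / π) ∫_0^{π/2} (cos ϑ)^α dϑ. -/
open MeasureTheory ProbabilityTheory Real

/-!
The event `Z₁ cos θ₁ - Z₂ cos θ₂ > z` forces `Z₁ cos θ₁ > z/2` or `Z₂ cos (θ₂ + π) > z/2`, so it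
suffices to bound `P(Z cos (θ + a) > t)` for `t ≥ z_th`. Conditioning on the angle, when
`w = cos (θ + a) ∈ (0, 1]` the event is `Z > t / w` with `t / w ≥ t`, inside the Pareto range, so
its probability is `c w^α / t^α`; averaging `max (cos (θ + a)) 0 ^ α` over a uniform angle gives
`(1/π) ∫₀^{π/2} cos^α`. Taking `t = z/2` and adding the two halves yields the constant.
-/

theorem integral_max_cos_rpow_neg_pi_div_two_three_pi_div_two {α : ℝ} (hα : 0 < α) :
    ∫ y in -(π / 2)..3 * π / 2, max (cos y) 0 ^ α = 2 * ∫ y in (0:ℝ)..π / 2, cos y ^ α := by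
  set g : ℝ → ℝ := fun y => max (cos y) 0 ^ α with hg
  have hint : ∀ a b : ℝ, IntervalIntegrable g volume a b := fun a b =>
    ((continuous_cos.max continuous_const).rpow_const fun _ => Or.inr hα.le).intervalIntegrable a b
  have h_right : ∫ y in (0:ℝ)..π / 2, g y = ∫ y in (0:ℝ)..π / 2, cos y ^ α := by
    refine intervalIntegral.integral_congr fun y hy => ?_
    rw [Set.uIcc_of_le (by positivity)] at hy
    simp only [hg, max_eq_left (cos_nonneg_of_mem_Icc ⟨by linarith [hy.1, pi_pos], hy.2⟩)]
  have h_left : ∫ y in -(π / 2)..0, g y = ∫ y in (0:ℝ)..π / 2, g y := by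
    simpa [hg, cos_neg] using (intervalIntegral.integral_comp_neg (a := 0) (b := π / 2) g).symm
  have h_middle : ∫ y in π / 2..3 * π / 2, g y = 0 := by
    rw [← intervalIntegral.integral_zero]
    refine intervalIntegral.integral_congr fun y hy => ?_
    rw [Set.uIcc_of_le (by linarith [pi_pos])] at hy
    simp only [hg, max_eq_right (cos_nonpos_of_pi_div_two_le_of_le hy.1 (by linarith [hy.2])),
      zero_rpow hα.ne']
  rw [← intervalIntegral.integral_add_adjacent_intervals (hint _ 0) (hint 0 _),
    ← intervalIntegral.integral_add_adjacent_intervals (hint 0 (π / 2)) (hint _ (3 * π / 2)),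
    h_left, h_middle, h_right]
  ring

theorem integral_cos_rpow_nonneg (α : ℝ) : 0 ≤ ∫ y in (0:ℝ)..π / 2, cos y ^ α :=
  intervalIntegral.integral_nonneg (by positivity) fun y hy =>
    rpow_nonneg (cos_nonneg_of_mem_Icc ⟨by linarith [hy.1, pi_pos], hy.2⟩) α

theorem integral_max_cos_add_rpow {α : ℝ} (hα : 0 < α) (a : ℝ) :
    ∫ y in (0:ℝ)..2 * π, max (cos (y + a)) 0 ^ α = 2 * ∫ y in (0:ℝ)..π / 2, cos y ^ α := by
  have hper : Function.Periodic (fun y => max (cos y) 0 ^ α) (2 * π) := fun y => by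
    simp only [cos_add_two_pi]
  rw [intervalIntegral.integral_comp_add_right (fun y => max (cos y) 0 ^ α), zero_add,
    add_comm, hper.intervalIntegral_add_eq a (-(π / 2)),
    show -(π / 2) + 2 * π = 3 * π / 2 by ring]
  exact integral_max_cos_rpow_neg_pi_div_two_three_pi_div_two hα

section RandomVariables

variable {Ω : Type*} {mΩ : MeasurableSpace Ω} {μ : Measure Ω}

theorem lintegral_max_cos_add_rpow_of_map_eq_uniform {θ : Ω → ℝ} (hθ : Measurable θ)
    (hunif : μ.map θ = (ENNReal.ofReal (2 * π))⁻¹ • volume.restrict (Set.Icc (0:ℝ) (2 * π)))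
    {α : ℝ} (hα : 0 < α) (a : ℝ) :
    ∫⁻ ω, ENNReal.ofReal (max (cos (θ ω + a)) 0 ^ α) ∂μ
      = ENNReal.ofReal ((∫ y in (0:ℝ)..π / 2, cos y ^ α) / π) := by
  have hcont : Continuous fun y => max (cos (y + a)) 0 ^ α :=
    ((continuous_cos.comp (continuous_add_const a)).max continuous_const).rpow_const
      fun _ => Or.inr hα.le
  rw [← lintegral_map (f := fun y => ENNReal.ofReal (max (cos (y + a)) 0 ^ α))
      (ENNReal.measurable_ofReal.comp hcont.measurable) hθ, hunif,
    lintegral_smul_measure, ← ofReal_integral_eq_lintegral_ofReal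
      hcont.integrableOn_Icc (ae_of_all _ fun y => rpow_nonneg (le_max_right _ _) α),
    integral_Icc_eq_integral_Ioc, ← intervalIntegral.integral_of_le (by positivity),
    integral_max_cos_add_rpow hα, smul_eq_mul, mul_comm, ← div_eq_mul_inv,
    ← ENNReal.ofReal_div_of_pos (by positivity)]
  congr 1
  field_simp

theorem measure_sub_gt_le_add (X Y : Ω → ℝ) (z : ℝ) :
    μ {ω | X ω - Y ω > z} ≤ μ {ω | z / 2 < X ω} + μ {ω | z / 2 < -Y ω} := by
  refine (measure_mono fun ω hω => ?_).trans (measure_union_le _ _)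
  simp only [Set.mem_union, Set.mem_ofPred_eq] at hω ⊢
  by_contra! h
  linarith

variable {Z : Ω → ℝ} {c α t : ℝ}

theorem measure_lt_mul_le_of_pareto_tail (hZ0 : ∀ ω, 0 ≤ Z ω) (ht : 0 < t)
    (htail : ∀ z ≥ t, μ {ω | Z ω > z} = ENNReal.ofReal (c / z ^ α)) {w : ℝ} (hw : w ≤ 1) :
    μ {ω | t < Z ω * w} ≤ ENNReal.ofReal (c / t ^ α) * ENNReal.ofReal (max w 0 ^ α) := by
  rcases le_or_gt w 0 with hw0 | hw0
  · have hempty : {ω | t < Z ω * w} = ∅ :=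
      Set.eq_empty_of_forall_notMem fun ω hω =>
        (mul_nonpos_of_nonneg_of_nonpos (hZ0 ω) hw0).not_gt (ht.trans hω)
    simp [hempty]
  · have hset : {ω | t < Z ω * w} = {ω | Z ω > t / w} := by
      ext ω; simp only [Set.mem_ofPred_eq, gt_iff_lt, div_lt_iff₀ hw0]
    rw [hset, htail _ (le_div_self ht.le hw0 hw), max_eq_left hw0.le,
      ← ENNReal.ofReal_mul' (rpow_nonneg hw0.le α), div_rpow ht.le hw0.le, div_div_eq_mul_div,
      mul_div_right_comm]

theorem measure_lt_mul_le_of_pareto_tail_of_indepFun [IsFiniteMeasure μ] {W : Ω → ℝ}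
    (hZ : Measurable Z) (hW : Measurable W) (hZ0 : ∀ ω, 0 ≤ Z ω) (hW1 : ∀ ω, W ω ≤ 1)
    (hind : IndepFun Z W μ) (ht : 0 < t)
    (htail : ∀ z ≥ t, μ {ω | Z ω > z} = ENNReal.ofReal (c / z ^ α)) :
    μ {ω | t < Z ω * W ω}
      ≤ ENNReal.ofReal (c / t ^ α) * ∫⁻ ω, ENNReal.ofReal (max (W ω) 0 ^ α) ∂μ := by
  have hS : MeasurableSet {p : ℝ × ℝ | t < p.1 * p.2} :=
    measurableSet_lt measurable_const (measurable_fst.mul measurable_snd)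
  have hmap := (indepFun_iff_map_prod_eq_prod_map_map hZ.aemeasurable hW.aemeasurable).1 hind
  have hW1' : ∀ᵐ w ∂μ.map W, w ≤ 1 :=
    (ae_map_iff hW.aemeasurable (measurableSet_le measurable_id measurable_const)).2
      (ae_of_all _ hW1)
  calc μ {ω | t < Z ω * W ω}
      = μ.map (fun ω => (Z ω, W ω)) {p | t < p.1 * p.2} := by
        rw [Measure.map_apply (hZ.prodMk hW) hS]
        rfl
    _ = ∫⁻ w, μ.map Z {x | t < x * w} ∂μ.map W := by
        rw [hmap, Measure.prod_apply_symm hS]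
        rfl
    _ ≤ ∫⁻ w, ENNReal.ofReal (c / t ^ α) * ENNReal.ofReal (max w 0 ^ α) ∂μ.map W := by
        refine lintegral_mono_ae (hW1'.mono fun w hw => ?_)
        rw [Measure.map_apply hZ (measurableSet_lt measurable_const (measurable_mul_const w))]
        exact measure_lt_mul_le_of_pareto_tail hZ0 ht htail hw
    _ = ENNReal.ofReal (c / t ^ α) * ∫⁻ ω, ENNReal.ofReal (max (W ω) 0 ^ α) ∂μ := by
        rw [lintegral_const_mul _ (by fun_prop), lintegral_map (by fun_prop) hW]

theorem measure_lt_mul_cos_add_le_of_pareto_tail [IsFiniteMeasure μ] {θ : Ω → ℝ}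
    (hZ : Measurable Z) (hθ : Measurable θ) (hZ0 : ∀ ω, 0 ≤ Z ω) (hind : IndepFun Z θ μ)
    (hunif : μ.map θ = (ENNReal.ofReal (2 * π))⁻¹ • volume.restrict (Set.Icc (0:ℝ) (2 * π)))
    (hα : 0 < α) (ht : 0 < t) (htail : ∀ z ≥ t, μ {ω | Z ω > z} = ENNReal.ofReal (c / z ^ α))
    (a : ℝ) :
    μ {ω | t < Z ω * cos (θ ω + a)}
      ≤ ENNReal.ofReal (c / t ^ α) * ENNReal.ofReal ((∫ y in (0:ℝ)..π / 2, cos y ^ α) / π) := by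
  rw [← lintegral_max_cos_add_rpow_of_map_eq_uniform hθ hunif hα a]
  exact measure_lt_mul_le_of_pareto_tail_of_indepFun hZ (by fun_prop) hZ0
    (fun ω => cos_le_one _) (hind.comp measurable_id (ψ := fun y => cos (y + a)) (by fun_prop))
    ht htail

end RandomVariables

theorem diff_Z_cos_upper_bound_general
    {Ω : Type*} [MeasureSpace Ω] [IsProbabilityMeasure (ℙ : Measure Ω)]
    (Z₁ Z₂ θ₁ θ₂ : Ω → ℝ)
    (hZ₁m : Measurable Z₁) (hZ₂m : Measurable Z₂)
    (hθ₁m : Measurable θ₁) (hθ₂m : Measurable θ₂)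
    (hZ₁pos : ∀ ω, 0 ≤ Z₁ ω) (hZ₂pos : ∀ ω, 0 ≤ Z₂ ω)
    (hindep : iIndepFun ![Z₁, Z₂, θ₁, θ₂] ℙ)
    (hZid : Measure.map Z₁ ℙ = Measure.map Z₂ ℙ)
    (hθ₁unif : Measure.map θ₁ ℙ
      = (ENNReal.ofReal (2 * π))⁻¹ • (volume.restrict (Set.Icc (0:ℝ) (2 * π))))
    (hθ₂unif : Measure.map θ₂ ℙ
      = (ENNReal.ofReal (2 * π))⁻¹ • (volume.restrict (Set.Icc (0:ℝ) (2 * π))))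
    (c z_th α : ℝ) (hzth : 0 < z_th) (hα : 0 < α)
    (htail : ∀ z ≥ z_th, ℙ {ω | Z₁ ω > z} = ENNReal.ofReal (c / z ^ α)) :
    ∀ z ≥ 2 * z_th,
      ℙ {ω | Z₁ ω * Real.cos (θ₁ ω) - Z₂ ω * Real.cos (θ₂ ω) > z}
        ≤ ENNReal.ofReal
            ((2 ^ (1 + α) * c / π) * (∫ ϑ in (0:ℝ)..(π / 2), (Real.cos ϑ) ^ α)
              / z ^ α) := by
  intro z hz
  set J := ∫ ϑ in (0:ℝ)..(π / 2), cos ϑ ^ α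
  have hzth_le : z_th ≤ z / 2 := by linarith
  have htail₁ : ∀ v ≥ z / 2, ℙ {ω | Z₁ ω > v} = ENNReal.ofReal (c / v ^ α) :=
    fun v hv => htail v (hzth_le.trans hv)
  have htail₂ : ∀ v ≥ z / 2, ℙ {ω | Z₂ ω > v} = ENNReal.ofReal (c / v ^ α) := fun v hv =>
    (IdentDistrib.measure_mem_eq ⟨hZ₁m.aemeasurable, hZ₂m.aemeasurable, hZid⟩
      measurableSet_Ioi).symm.trans (htail₁ v hv)
  have hind₁ : IndepFun Z₁ θ₁ ℙ := by simpa using hindep.indepFun (i := 0) (j := 2) (by decide)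
  have hind₂ : IndepFun Z₂ θ₂ ℙ := by simpa using hindep.indepFun (i := 1) (j := 3) (by decide)
  have hz_pos : 0 < z / 2 := hzth.trans_le hzth_le
  have h₁ := measure_lt_mul_cos_add_le_of_pareto_tail hZ₁m hθ₁m hZ₁pos hind₁ hθ₁unif hα hz_pos htail₁ 0
  have h₂ := measure_lt_mul_cos_add_le_of_pareto_tail hZ₂m hθ₂m hZ₂pos hind₂ hθ₂unif hα hz_pos htail₂ π
  simp only [add_zero] at h₁
  simp only [cos_add_pi, mul_neg] at h₂
  calc ℙ {ω | Z₁ ω * cos (θ₁ ω) - Z₂ ω * cos (θ₂ ω) > z}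
      ≤ ℙ {ω | z / 2 < Z₁ ω * cos (θ₁ ω)} + ℙ {ω | z / 2 < -(Z₂ ω * cos (θ₂ ω))} :=
        measure_sub_gt_le_add _ _ z
    _ ≤ ENNReal.ofReal (c / (z / 2) ^ α) * ENNReal.ofReal (J / π)
          + ENNReal.ofReal (c / (z / 2) ^ α) * ENNReal.ofReal (J / π) := add_le_add h₁ h₂
    _ = ENNReal.ofReal (2 * (c / (z / 2) ^ α * (J / π))) := by
        rw [← two_mul, ← ENNReal.ofReal_mul' (div_nonneg (integral_cos_rpow_nonneg α) pi_pos.le),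
          ENNReal.ofReal_mul zero_le_two, ENNReal.ofReal_ofNat]
    _ = ENNReal.ofReal (2 ^ (1 + α) * c / π * J / z ^ α) := by
        rw [div_rpow (by linarith) zero_le_two, rpow_add two_pos, rpow_one]
        field_simp

theorem diff_Z_cos_upper_bound
    {Ω : Type*} [MeasureSpace Ω] [IsProbabilityMeasure (ℙ : Measure Ω)]
    (Z₁ Z₂ θ₁ θ₂ : Ω → ℝ)
    (hZ₁m : Measurable Z₁) (hZ₂m : Measurable Z₂)
    (hθ₁m : Measurable θ₁) (hθ₂m : Measurable θ₂)
    (hZ₁pos : ∀ ω, 0 ≤ Z₁ ω) (hZ₂pos : ∀ ω, 0 ≤ Z₂ ω)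
    (hindep : iIndepFun ![Z₁, Z₂, θ₁, θ₂] ℙ)
    (hZid : Measure.map Z₁ ℙ = Measure.map Z₂ ℙ)
    (hθ₁unif : Measure.map θ₁ ℙ
      = (ENNReal.ofReal (2 * π))⁻¹ • (volume.restrict (Set.Icc (0:ℝ) (2 * π))))
    (hθ₂unif : Measure.map θ₂ ℙ
      = (ENNReal.ofReal (2 * π))⁻¹ • (volume.restrict (Set.Icc (0:ℝ) (2 * π))))
    (c z_th α : ℝ) (hc : 0 < c) (hzth : 0 < z_th) (hα : 0 < α)
    (htail : ∀ z ≥ z_th, ℙ {ω | Z₁ ω > z} = ENNReal.ofReal (c / z ^ α)) :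
    ∀ z ≥ 2 * z_th,
      ℙ {ω | Z₁ ω * Real.cos (θ₁ ω) - Z₂ ω * Real.cos (θ₂ ω) > z}
        ≤ ENNReal.ofReal
            ((2 ^ (1 + α) * c / π) * (∫ ϑ in (0:ℝ)..(π / 2), (Real.cos ϑ) ^ α)
              / z ^ α) :=
  diff_Z_cos_upper_bound_general Z₁ Z₂ θ₁ θ₂ hZ₁m hZ₂m hθ₁m hθ₂m hZ₁pos hZ₂pos hindep hZid hθ₁unif
    hθ₂unif c z_th α hzth hα htail
end

section
/- Let Z₁, Z₂ be i.i.d. nonnegative random variables with P(Z > z) = c/z^α for all z ≥ z_th (c > 0, z_th > 0, α > 0), and θ₁, θ₂ i.i.d. Uniform[0,2π], all mutually independent. Then for all z ≥ 2 z_th, P(Z₁ cos θ₁ − Z₂ cos θ₂ > z) ≥ c_l / z^α, where c_l = (c / (2π)) ∫_0^{π/2} (cos ϑ)^α dϑ. -/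
/-!
On the event `{Z₁ cos θ₁ > z} ∩ {cos θ₂ ≤ 0}` the difference exceeds `z`, and the two events
are independent; the second one has probability `1/2`. Conditionally on `θ₁ = t` with
`cos t > 0`, the first event is `{Z₁ > z / cos t}`, and `z / cos t ≥ z ≥ z_th` lies in the range
of the power tail, so its probability is `c cos^α t / z^α`. Integrating over the two
quarter-periods `(0, π/2)` and `(3π/2, 2π)` where `cos > 0` gives
`P(Z₁ cos θ₁ > z) ≥ (c / π) z^{-α} ∫_0^{π/2} cos^α`.
-/

open MeasureTheory ProbabilityTheory Real

section
open Set

noncomputable def uniformAngle : Measure ℝ :=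
  (ENNReal.ofReal (2 * π))⁻¹ • volume.restrict (Icc 0 (2 * π))

lemma measure_lt_mul_eq_of_tail {ν : Measure ℝ} {c z_th α z s : ℝ}
    (htail : ∀ t ≥ z_th, ν (Ioi t) = ENNReal.ofReal (c / t ^ α))
    (hz : z_th ≤ z) (hz₀ : 0 ≤ z) (hs : 0 < s) (hs₁ : s ≤ 1) :
    ν {x | z < x * s} = ENNReal.ofReal (c * s ^ α / z ^ α) := by
  have hset : {x : ℝ | z < x * s} = Ioi (z / s) := by
    ext x; simp [div_lt_iff₀ hs]
  have hz_le : z ≤ z / s := (le_div_iff₀ hs).mpr (by nlinarith)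
  rw [hset, htail _ (hz.trans hz_le), div_rpow hz₀ hs.le, div_div_eq_mul_div]

lemma two_mul_setLIntegral_Ioo_cos_le (f : ℝ → ENNReal) :
    2 * ∫⁻ θ in Ioo 0 (π / 2), f (cos θ) ≤ ∫⁻ θ in Icc 0 (2 * π), f (cos θ) := by
  have hπ := pi_pos
  have hreflect : ∫⁻ θ in Ioo (3 * π / 2) (2 * π), f (cos θ)
      = ∫⁻ θ in Ioo 0 (π / 2), f (cos θ) := by
    rw [← (volume.measurePreserving_sub_left (2 * π)).setLIntegral_comp_preimage_emb
      (measurableEmbedding_subLeft _), preimage_const_sub_Ioo]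
    simp only [cos_two_pi_sub]
    congr 3 <;> ring
  have hdisj : Disjoint (Ioo 0 (π / 2)) (Ioo (3 * π / 2) (2 * π)) :=
    disjoint_left.mpr fun x h₁ h₂ => by linarith [h₁.2, h₂.1]
  have hsub : Ioo 0 (π / 2) ∪ Ioo (3 * π / 2) (2 * π) ⊆ Icc 0 (2 * π) :=
    union_subset (Ioo_subset_Icc_self.trans (Icc_subset_Icc le_rfl (by linarith)))
      (Ioo_subset_Icc_self.trans (Icc_subset_Icc (by linarith) le_rfl))
  calc 2 * ∫⁻ θ in Ioo 0 (π / 2), f (cos θ)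
      = ∫⁻ θ in Ioo 0 (π / 2) ∪ Ioo (3 * π / 2) (2 * π), f (cos θ) := by
        rw [lintegral_union measurableSet_Ioo hdisj, hreflect, two_mul]
    _ ≤ ∫⁻ θ in Icc 0 (2 * π), f (cos θ) := lintegral_mono_set hsub

lemma setLIntegral_Ioo_ofReal_cos_rpow {α : ℝ} (hα : 0 ≤ α) :
    ∫⁻ θ in Ioo 0 (π / 2), ENNReal.ofReal (cos θ ^ α)
      = ENNReal.ofReal (∫ θ in 0..π / 2, cos θ ^ α) := by
  have hcont : Continuous fun θ => cos θ ^ α := (continuous_rpow_const hα).comp continuous_cos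
  rw [intervalIntegral.integral_of_le (by positivity), integral_Ioc_eq_integral_Ioo,
    ofReal_integral_eq_lintegral_ofReal (hcont.integrableOn_Icc.mono_set Ioo_subset_Icc_self)]
  refine (ae_restrict_iff' measurableSet_Ioo).mpr (ae_of_all _ fun θ hθ => ?_)
  exact rpow_nonneg (cos_nonneg_of_mem_Icc ⟨by linarith [hθ.1, pi_pos], hθ.2.le⟩) α

lemma ProbabilityTheory.IndepFun.measure_preimage_eq_lintegral {Ω β γ : Type*}
    [MeasurableSpace Ω] [MeasurableSpace β] [MeasurableSpace γ] {μ : Measure Ω} [IsFiniteMeasure μ]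
    {X : Ω → β} {Y : Ω → γ} (hX : Measurable X) (hY : Measurable Y) (h : IndepFun X Y μ)
    {s : Set (β × γ)} (hs : MeasurableSet s) :
    μ ((fun ω => (X ω, Y ω)) ⁻¹' s) = ∫⁻ x, μ.map Y (Prod.mk x ⁻¹' s) ∂μ.map X := by
  rw [← Measure.map_apply (hX.prodMk hY) hs,
    (indepFun_iff_map_prod_eq_prod_map_map hX.aemeasurable hY.aemeasurable).mp h,
    Measure.prod_apply hs]

lemma ofReal_inv_two_pi_mul_two : (ENNReal.ofReal (2 * π))⁻¹ * 2 = ENNReal.ofReal π⁻¹ := by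
  rw [← ENNReal.ofReal_inv_of_pos (by positivity), ← ENNReal.ofReal_ofNat 2,
    ← ENNReal.ofReal_mul (by positivity)]
  congr 1
  field_simp

lemma measure_lt_mul_cos_ge {Ω : Type*} [MeasurableSpace Ω] {μ : Measure Ω} [IsFiniteMeasure μ]
    {Z θ : Ω → ℝ} (hZ : Measurable Z) (hθ : Measurable θ) (hind : IndepFun θ Z μ)
    (hθunif : μ.map θ = uniformAngle) {c z_th α z : ℝ} (hc : 0 ≤ c) (hα : 0 ≤ α)
    (htail : ∀ t ≥ z_th, μ {ω | Z ω > t} = ENNReal.ofReal (c / t ^ α))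
    (hz : z_th ≤ z) (hz₀ : 0 ≤ z) :
    ENNReal.ofReal (c / π * (∫ t in 0..π / 2, cos t ^ α) / z ^ α)
      ≤ μ {ω | z < Z ω * cos (θ ω)} := by
  set ν := μ.map Z
  have hν : ∀ t ≥ z_th, ν (Ioi t) = ENNReal.ofReal (c / t ^ α) := fun t ht => by
    rw [Measure.map_apply hZ measurableSet_Ioi]; exact htail t ht
  have hinner : ∀ t ∈ Ioo 0 (π / 2),
      ν {x | z < x * cos t} = ENNReal.ofReal (c / z ^ α) * ENNReal.ofReal (cos t ^ α) := by
    intro t ht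
    have hcos : 0 < cos t := cos_pos_of_mem_Ioo ⟨by linarith [ht.1, pi_pos], ht.2⟩
    rw [measure_lt_mul_eq_of_tail hν hz hz₀ hcos (cos_le_one t),
      ← ENNReal.ofReal_mul (by positivity)]
    ring_nf
  have hS : MeasurableSet {p : ℝ × ℝ | z < p.2 * cos p.1} :=
    measurableSet_lt measurable_const (measurable_snd.mul (measurable_cos.comp measurable_fst))
  calc ENNReal.ofReal (c / π * (∫ t in 0..π / 2, cos t ^ α) / z ^ α)
      = (ENNReal.ofReal (2 * π))⁻¹ * (2 * (ENNReal.ofReal (c / z ^ α)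
          * ENNReal.ofReal (∫ t in 0..π / 2, cos t ^ α))) := by
        rw [← mul_assoc, ofReal_inv_two_pi_mul_two, ← ENNReal.ofReal_mul (by positivity),
          ← ENNReal.ofReal_mul (by positivity)]
        ring_nf
    _ = (ENNReal.ofReal (2 * π))⁻¹ * (2 * ∫⁻ t in Ioo 0 (π / 2), ν {x | z < x * cos t}) := by
        rw [setLIntegral_congr_fun measurableSet_Ioo hinner, lintegral_const_mul' _ _
          ENNReal.ofReal_ne_top, setLIntegral_Ioo_ofReal_cos_rpow hα]
    _ ≤ (ENNReal.ofReal (2 * π))⁻¹ * ∫⁻ t in Icc 0 (2 * π), ν {x | z < x * cos t} := by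
        gcongr
        exact two_mul_setLIntegral_Ioo_cos_le fun s => ν {x | z < x * s}
    _ = μ {ω | z < Z ω * cos (θ ω)} := by
        show _ = μ ((fun ω => (θ ω, Z ω)) ⁻¹' {p | z < p.2 * cos p.1})
        rw [hind.measure_preimage_eq_lintegral hθ hZ hS, hθunif, uniformAngle,
          lintegral_smul_measure, smul_eq_mul]
        rfl

lemma half_le_measure_cos_nonpos {Ω : Type*} [MeasurableSpace Ω] {μ : Measure Ω}
    {θ : Ω → ℝ} (hθ : Measurable θ) (hθunif : μ.map θ = uniformAngle) :
    ENNReal.ofReal (1 / 2) ≤ μ {ω | cos (θ ω) ≤ 0} := by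
  have hT : MeasurableSet {t : ℝ | cos t ≤ 0} := measurableSet_le measurable_cos measurable_const
  have hπ := pi_pos
  have hIcc : Icc (π / 2) (3 * π / 2) ⊆ {t | cos t ≤ 0} ∩ Icc 0 (2 * π) := fun t ht =>
    ⟨cos_nonpos_of_pi_div_two_le_of_le ht.1 (by linarith [ht.2]),
      by linarith [ht.1], by linarith [ht.2]⟩
  calc ENNReal.ofReal (1 / 2)
      = (ENNReal.ofReal (2 * π))⁻¹ * volume (Icc (π / 2) (3 * π / 2)) := by
        rw [volume_Icc, ← ENNReal.ofReal_inv_of_pos (by positivity),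
          ← ENNReal.ofReal_mul (by positivity)]
        congr 1
        field_simp
        ring
    _ ≤ (ENNReal.ofReal (2 * π))⁻¹ * volume ({t | cos t ≤ 0} ∩ Icc 0 (2 * π)) := by
        gcongr
    _ = μ {ω | cos (θ ω) ≤ 0} := by
        rw [← Measure.restrict_apply hT, ← smul_eq_mul, ← Measure.smul_apply, ← uniformAngle,
          ← hθunif, Measure.map_apply hθ hT]
        rfl

end

theorem diff_Z_cos_lower_bound_general
    {Ω : Type*} [MeasureSpace Ω] [IsProbabilityMeasure (ℙ : Measure Ω)]
    (Z₁ Z₂ θ₁ θ₂ : Ω → ℝ)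
    (hZ₁m : Measurable Z₁)
    (hθ₁m : Measurable θ₁) (hθ₂m : Measurable θ₂)
    (hZ₂pos : ∀ ω, 0 ≤ Z₂ ω)
    (hindep : iIndepFun ![Z₁, Z₂, θ₁, θ₂] ℙ)
    (hθ₁unif : Measure.map θ₁ ℙ
      = (ENNReal.ofReal (2 * π))⁻¹ • (volume.restrict (Set.Icc (0:ℝ) (2 * π))))
    (hθ₂unif : Measure.map θ₂ ℙ
      = (ENNReal.ofReal (2 * π))⁻¹ • (volume.restrict (Set.Icc (0:ℝ) (2 * π))))
    (c z_th α : ℝ) (hc : 0 < c) (hzth : 0 < z_th) (hα : 0 < α)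
    (htail : ∀ z ≥ z_th, ℙ {ω | Z₁ ω > z} = ENNReal.ofReal (c / z ^ α)) :
    ∀ z ≥ 2 * z_th,
      ℙ {ω | Z₁ ω * Real.cos (θ₁ ω) - Z₂ ω * Real.cos (θ₂ ω) > z}
        ≥ ENNReal.ofReal
            ((c / (2 * π)) * (∫ ϑ in (0:ℝ)..(π / 2), (Real.cos ϑ) ^ α)
              / z ^ α) := by
  intro z hz
  have hindep₃ : iIndepFun ![θ₁, Z₁, θ₂] ℙ := by
    convert hindep.precomp (g := ![2, 0, 3]) (by decide) using 1
    funext i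
    fin_cases i <;> rfl
  have hmeas : ∀ i, Measurable (![θ₁, Z₁, θ₂] i) := by
    intro i; fin_cases i <;> assumption
  have hθZ : IndepFun θ₁ Z₁ ℙ := hindep₃.indepFun (i := 0) (j := 1) (by decide)
  have hpair : IndepFun (fun ω => (θ₁ ω, Z₁ ω)) θ₂ ℙ :=
    hindep₃.indepFun_prodMk hmeas 0 1 2 (by decide) (by decide)
  have hS : MeasurableSet {p : ℝ × ℝ | z < p.2 * cos p.1} :=
    measurableSet_lt measurable_const (measurable_snd.mul (measurable_cos.comp measurable_fst))
  have hT : MeasurableSet {t : ℝ | cos t ≤ 0} := measurableSet_le measurable_cos measurable_const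
  calc ENNReal.ofReal (c / (2 * π) * (∫ ϑ in (0:ℝ)..(π / 2), cos ϑ ^ α) / z ^ α)
      = ENNReal.ofReal (c / π * (∫ ϑ in (0:ℝ)..(π / 2), cos ϑ ^ α) / z ^ α)
          * ENNReal.ofReal (1 / 2) := by
        rw [← ENNReal.ofReal_mul' (by norm_num)]
        ring_nf
    _ ≤ ℙ {ω | z < Z₁ ω * cos (θ₁ ω)} * ℙ {ω | cos (θ₂ ω) ≤ 0} := by
        gcongr
        · exact measure_lt_mul_cos_ge hZ₁m hθ₁m hθZ hθ₁unif hc.le hα.le htail (by linarith)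
            (by linarith)
        · exact half_le_measure_cos_nonpos hθ₂m hθ₂unif
    _ = ℙ ({ω | z < Z₁ ω * cos (θ₁ ω)} ∩ {ω | cos (θ₂ ω) ≤ 0}) :=
        (hpair.measure_inter_preimage_eq_mul _ _ hS hT).symm
    _ ≤ ℙ {ω | Z₁ ω * cos (θ₁ ω) - Z₂ ω * cos (θ₂ ω) > z} := by
        refine measure_mono fun ω ⟨hA, hB⟩ => ?_
        have hA' : z < Z₁ ω * cos (θ₁ ω) := hA
        have := mul_nonpos_of_nonneg_of_nonpos (hZ₂pos ω) hB
        show _ > z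
        linarith

theorem diff_Z_cos_lower_bound
    {Ω : Type*} [MeasureSpace Ω] [IsProbabilityMeasure (ℙ : Measure Ω)]
    (Z₁ Z₂ θ₁ θ₂ : Ω → ℝ)
    (hZ₁m : Measurable Z₁) (hZ₂m : Measurable Z₂)
    (hθ₁m : Measurable θ₁) (hθ₂m : Measurable θ₂)
    (hZ₁pos : ∀ ω, 0 ≤ Z₁ ω) (hZ₂pos : ∀ ω, 0 ≤ Z₂ ω)
    (hindep : iIndepFun ![Z₁, Z₂, θ₁, θ₂] ℙ)
    (hZid : Measure.map Z₁ ℙ = Measure.map Z₂ ℙ)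
    (hθ₁unif : Measure.map θ₁ ℙ
      = (ENNReal.ofReal (2 * π))⁻¹ • (volume.restrict (Set.Icc (0:ℝ) (2 * π))))
    (hθ₂unif : Measure.map θ₂ ℙ
      = (ENNReal.ofReal (2 * π))⁻¹ • (volume.restrict (Set.Icc (0:ℝ) (2 * π))))
    (c z_th α : ℝ) (hc : 0 < c) (hzth : 0 < z_th) (hα : 0 < α)
    (htail : ∀ z ≥ z_th, ℙ {ω | Z₁ ω > z} = ENNReal.ofReal (c / z ^ α)) :
    ∀ z ≥ 2 * z_th,
      ℙ {ω | Z₁ ω * Real.cos (θ₁ ω) - Z₂ ω * Real.cos (θ₂ ω) > z}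
        ≥ ENNReal.ofReal
            ((c / (2 * π)) * (∫ ϑ in (0:ℝ)..(π / 2), (Real.cos ϑ) ^ α)
              / z ^ α) :=
  diff_Z_cos_lower_bound_general Z₁ Z₂ θ₁ θ₂ hZ₁m hθ₁m hθ₂m hZ₂pos hindep hθ₁unif hθ₂unif c z_th α
    hc hzth hα htail
end
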